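/- Let S be a finite p-group, F a saturated fusion system on S, and P ≤ S an F-centric subgroup. Then every F-morphism φ : P → S has a nonextendable extension that is unique up to precomposition with conjugation by elements of Z(P): if ψ₁ : Q₁ → S and ψ₂ : Q₂ → S are F-morphisms extending φ (P ≤ Q_i, ψ_i|_P = φ) and neither ψ₁ nor ψ₂ extends to any strictly larger subgroup, then Q₁ = Q₂ and ψ₂ = ψ₁ ∘ c_z for some z ∈ Z(P). -/

import Mathlib

/-- A fusion system on a group `S`, encoded via partial maps: `Mor P f` asserts that the
restriction of `f : S → S` to the subgroup `P ≤ S` is a morphism of the fusion system,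
i.e. an injective group homomorphism from `P` into `S`. -/
structure FusionSystem (S : Type) [Group S] where
  /-- `Mor P f`: the restriction of `f` to `P` is a morphism `P → S` of the fusion system. -/
  Mor : Subgroup S → (S → S) → Prop
  mul_on : ∀ {P : Subgroup S} {f : S → S}, Mor P f → ∀ x ∈ P, ∀ y ∈ P, f (x * y) = f x * f y
  inj_on : ∀ {P : Subgroup S} {f : S → S}, Mor P f → Set.InjOn f (P : Set S)
  /-- Every homomorphism induced by conjugation in `S` is a morphism. -/
  conj_mem : ∀ (P : Subgroup S) (s : S), Mor P fun x => s * x * s⁻¹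
  /-- Morphisms are closed under composition. -/
  comp_mem : ∀ {P Q : Subgroup S} {f g : S → S}, Mor P f → Mor Q g →
      (∀ x ∈ P, f x ∈ Q) → Mor P (g ∘ f)
  /-- The inverse of the isomorphism onto the image is again a morphism. -/
  inv_mem : ∀ {P : Subgroup S} {f : S → S} (Q : Subgroup S), Mor P f →
      (Q : Set S) = f '' (P : Set S) → ∃ g : S → S, Mor Q g ∧ ∀ x ∈ P, g (f x) = x
  /-- Morphisms restrict to subgroups. -/
  restrict_mem : ∀ {P : Subgroup S} {f : S → S} (Q : Subgroup S), Q ≤ P → Mor P f → Mor Q f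

namespace FusionSystem

variable {S : Type} [Group S] (F : FusionSystem S)

/-- Two subgroups are `F`-conjugate if some morphism of `F` maps one onto the other. -/
def IsConj (P Q : Subgroup S) : Prop :=
  ∃ f : S → S, F.Mor P f ∧ f '' (P : Set S) = (Q : Set S)

/-- `P` is fully `F`-normalized: its normalizer has maximal order in its `F`-class. -/
def FullyNormalized (P : Subgroup S) : Prop :=
  ∀ Q : Subgroup S, F.IsConj P Q → Nat.card (Subgroup.normalizer (Q : Set S)) ≤ Nat.card (Subgroup.normalizer (P : Set S))

/-- `P` is fully `F`-centralized: its centralizer has maximal order in its `F`-class. -/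
def FullyCentralized (P : Subgroup S) : Prop :=
  ∀ Q : Subgroup S, F.IsConj P Q →
    Nat.card (Subgroup.centralizer (Q : Set S)) ≤ Nat.card (Subgroup.centralizer (P : Set S))

/-- `P` is `F`-centric: every `F`-conjugate of `P` contains its own `S`-centralizer. -/
def Centric (P : Subgroup S) : Prop :=
  ∀ Q : Subgroup S, F.IsConj P Q → (Subgroup.centralizer (Q : Set S) : Set S) ⊆ (Q : Set S)

/-- Saturation of a fusion system at the prime `p`: (I) fully normalized subgroups are fully
centralized and their `S`-automorphisms have index prime to `p` among their
`F`-automorphisms (the Sylow axiom); (II) the extension axiom: a morphism with fully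
centralized image extends to its extender `N_φ`. -/
def Saturated (p : ℕ) : Prop :=
  (∀ P : Subgroup S, F.FullyNormalized P →
    F.FullyCentralized P ∧
      ¬ p ∣ (Set.ncard {g : ↥P → S | ∃ f : S → S, F.Mor P f ∧
              f '' (P : Set S) = (P : Set S) ∧ ∀ x : ↥P, g x = f (x : S)} /
        Set.ncard {g : ↥P → S | ∃ s ∈ Subgroup.normalizer (P : Set S), ∀ x : ↥P, g x = s * (x : S) * s⁻¹})) ∧
  (∀ (P : Subgroup S) (f : S → S), F.Mor P f →
    (∀ Q : Subgroup S, (Q : Set S) = f '' (P : Set S) → F.FullyCentralized Q) →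
    ∃ (R : Subgroup S) (g : S → S), F.Mor R g ∧ P ≤ R ∧ (∀ x ∈ P, g x = f x) ∧
      (R : Set S) = {x : S | x ∈ Subgroup.normalizer (P : Set S) ∧
        ∃ y : S, ∀ q ∈ P, f (x * q * x⁻¹) = y * f q * y⁻¹})

/-- A morphism of `F` defined on `P` is nonextendable if it admits no extension to a strictly
larger subgroup. -/
def Nonextendable (P : Subgroup S) (f : S → S) : Prop :=
  F.Mor P f ∧ ∀ (R : Subgroup S) (g : S → S), P ≤ R → F.Mor R g →
    (∀ x ∈ P, g x = f x) → R = P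

end FusionSystem

/-!
The key fact is the epi-property: two morphisms `D → S` agreeing on a centric `P ≤ D` differ by
conjugation by some `z ∈ Z(P)`. It reduces to showing that a morphism fixing a centric `T ≤ R`
pointwise is conjugation by an element of `T`. Since `S` is a `p`-group, `T < N_R(T)`; on `N_R(T)` such a
morphism is, after transport to a fully normalized conjugate `V`, a `p`-element of `Aut_F(V)`
acting trivially on a centric subgroup, and the Sylow axiom makes it conjugation by an element of
that subgroup. Climbing the normalizer tower gives the epi-property.

For uniqueness, let `D = Q₁ ∩ Q₂`, so `ψ₂ = ψ₁ ∘ c_z` on `D`. If the domains are nested, the larger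
morphism composed with `c_z` extends the smaller one, so they coincide. Otherwise the extension
axiom extends `ψ₂|_D` to a subgroup containing both `N_{Q₁}(D)` and `N_{Q₂}(D)`, each strictly
larger than `D`, and induction on `D` shows that both `Q₁` and `Q₂` equal the domain of a
nonextendable extension of it.
-/

theorem IsPGroup.lt_inf_normalizer {S : Type*} [Group S] [Finite S] {p : ℕ} [Fact p.Prime]
    (hS : IsPGroup p S) {A B : Subgroup S} (h : A < B) :
    A < B ⊓ Subgroup.normalizer (A : Set S) := by
  have : Group.IsNilpotent B := (hS.to_subgroup B).isNilpotent
  have hlt : A.subgroupOf B < (Subgroup.normalizer (A : Set S)).subgroupOf B := by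
    rw [Subgroup.subgroupOf_normalizer_eq h.le]
    refine Group.normalizerCondition_of_isNilpotent _ (lt_top_iff_ne_top.mpr fun htop => ?_)
    exact h.not_ge (Subgroup.subgroupOf_eq_top.mp htop)
  have := (Subgroup.map_lt_map_iff_of_injective B.subtype_injective).mpr hlt
  rwa [Subgroup.subgroupOf_map_subtype, Subgroup.subgroupOf_map_subtype, inf_of_le_left h.le,
    inf_comm] at this

theorem Subgroup.exists_inv_mul_mul_mem_of_not_dvd_index {G : Type*} [Group G] [Finite G]
    {p : ℕ} [Fact p.Prime] {H : Subgroup G} (hH : ¬ p ∣ H.index) {g : G} {k : ℕ}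
    (hg : g ^ p ^ k = 1) : ∃ x : G, x⁻¹ * g * x ∈ H := by
  have hpg : IsPGroup p (zpowers g) :=
    IsPGroup.of_card_dvd_pow (n := k) (Nat.card_zpowers g ▸ orderOf_dvd_of_pow_eq_one hg)
  obtain ⟨q, hq⟩ := hpg.nonempty_fixed_point_of_prime_not_dvd_card (G ⧸ H)
    (by rwa [← Subgroup.index_eq_card])
  obtain ⟨x, rfl⟩ := QuotientGroup.mk_surjective q
  have hfix : (g⁻¹ * x : G) = (x : G ⧸ H) :=
    MulAction.mem_fixedPoints.mp hq ⟨g⁻¹, inv_mem (mem_zpowers g)⟩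
  exact ⟨x, by simpa [mul_assoc] using QuotientGroup.eq.mp hfix⟩

theorem MulAut.pow_apply_eq_mul_pow {G : Type*} [Group G] (π : MulAut G) (x : G)
    (h : π (x⁻¹ * π x) = x⁻¹ * π x) (n : ℕ) : (π ^ n) x = x * (x⁻¹ * π x) ^ n := by
  induction n with
  | zero => simp
  | succ n ih =>
    rw [pow_succ', MulAut.mul_apply, ih, map_mul, map_pow, h, pow_succ', ← mul_assoc,
      mul_inv_cancel_left]

theorem MulAut.image_eq_of_coe_apply {S : Type*} [Group S] {V : Subgroup S} {π : MulAut V}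
    {f : S → S} (e : ∀ x : V, (π x : S) = f x) : f '' V = V := by
  ext y
  constructor
  · rintro ⟨x, hx, rfl⟩
    exact e ⟨x, hx⟩ ▸ (π ⟨x, hx⟩).2
  · intro hy
    exact ⟨π⁻¹ ⟨y, hy⟩, (π⁻¹ ⟨y, hy⟩).2, by rw [← e, MulAut.apply_inv_self]⟩

theorem MulAut.coe_apply_injective {S : Type*} [Group S] (V : Subgroup S) :
    Function.Injective fun (π : MulAut V) (x : V) => (π x : S) :=
  fun _ _ h => MulEquiv.ext fun x => Subtype.ext (congrFun h x)

namespace FusionSystem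

variable {S : Type} [Group S] {F : FusionSystem S}

section Morphisms

variable {P Q : Subgroup S} {f ψ : S → S}

theorem Mor.map_one (h : F.Mor P f) : f 1 = 1 := by
  have h1 := F.mul_on h 1 P.one_mem 1 P.one_mem
  rw [one_mul] at h1
  exact mul_eq_left.mp h1.symm

theorem Mor.map_inv (h : F.Mor P f) {x : S} (hx : x ∈ P) : f x⁻¹ = (f x)⁻¹ :=
  eq_inv_of_mul_eq_one_left <| by
    rw [← F.mul_on h _ (P.inv_mem hx) _ hx, inv_mul_cancel, h.map_one]

theorem Mor.map_conj (h : F.Mor P f) {x y : S} (hx : x ∈ P) (hy : y ∈ P) :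
    f (x * y * x⁻¹) = f x * f y * (f x)⁻¹ := by
  rw [F.mul_on h _ (P.mul_mem hx hy) _ (P.inv_mem hx), F.mul_on h _ hx _ hy, h.map_inv hx]

theorem Mor.comp_conj (h : F.Mor Q ψ) {z : S} (hz : z ∈ Q) :
    F.Mor Q fun x => ψ (z * x * z⁻¹) :=
  F.comp_mem (F.conj_mem Q z) h fun _ hx => Q.mul_mem (Q.mul_mem hz hx) (Q.inv_mem hz)

theorem Mor.conj_comp (h : F.Mor Q ψ) (z : S) : F.Mor Q fun x => z⁻¹ * ψ x * z := by
  simpa [Function.comp_def] using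
    F.comp_mem h (F.conj_mem ⊤ z⁻¹) fun _ _ => Subgroup.mem_top _

variable (F) in
theorem mor_id (P : Subgroup S) : F.Mor P fun x => x := by
  simpa using F.conj_mem P 1

variable (F) in
def morImage (h : F.Mor P f) : Subgroup S where
  carrier := f '' P
  one_mem' := ⟨1, P.one_mem, h.map_one⟩
  mul_mem' := by
    rintro _ _ ⟨a, ha, rfl⟩ ⟨b, hb, rfl⟩
    exact ⟨a * b, P.mul_mem ha hb, F.mul_on h a ha b hb⟩
  inv_mem' := by
    rintro _ ⟨a, ha, rfl⟩
    exact ⟨a⁻¹, P.inv_mem ha, h.map_inv ha⟩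

end Morphisms

section Centric

variable {P Q : Subgroup S}

theorem isConj_refl (P : Subgroup S) : F.IsConj P P :=
  ⟨fun x => x, F.mor_id P, Set.image_id _⟩

theorem IsConj.trans {R : Subgroup S} (hPQ : F.IsConj P Q) (hQR : F.IsConj Q R) :
    F.IsConj P R := by
  obtain ⟨f, hf, hfQ⟩ := hPQ
  obtain ⟨g, hg, hgR⟩ := hQR
  exact ⟨g ∘ f, F.comp_mem hf hg fun x hx => (hfQ ▸ ⟨x, hx, rfl⟩ : f x ∈ (Q : Set S)),
    by rw [Set.image_comp, hfQ, hgR]⟩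

theorem Centric.of_isConj (hP : F.Centric P) (h : F.IsConj P Q) : F.Centric Q :=
  fun R hR => hP R (h.trans hR)

theorem Centric.centralizer_le (hP : F.Centric P) : Subgroup.centralizer (P : Set S) ≤ P :=
  hP P (isConj_refl P)

theorem Centric.mono (hP : F.Centric P) (hPQ : P ≤ Q) : F.Centric Q := by
  rintro Q' ⟨f, hf, hfQ'⟩
  have hfP : F.Mor P f := F.restrict_mem P hPQ hf
  have himage : (F.morImage hfP : Set S) ⊆ Q' := hfQ' ▸ Set.image_mono hPQ
  exact fun x hx => himage <| (hP.of_isConj ⟨f, hfP, rfl⟩).centralizer_le <|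
    Subgroup.centralizer_le himage hx

/-- `C_S(f(P)) ⊆ f(C_S(P))` because `f(P)` is again centric. -/
theorem Centric.fullyCentralized [Finite S] (hP : F.Centric P) : F.FullyCentralized P := by
  rintro Q ⟨f, hf, hPQ⟩
  have hsub : (Subgroup.centralizer (Q : Set S) : Set S) ⊆
      f '' (Subgroup.centralizer (P : Set S)) := by
    intro c hc
    obtain ⟨x, hx, rfl⟩ : c ∈ f '' P := hPQ ▸ (hP.of_isConj ⟨f, hf, hPQ⟩).centralizer_le hc
    refine ⟨x, Subgroup.mem_centralizer_iff.mpr fun q hq => F.inj_on hf (P.mul_mem hq hx)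
      (P.mul_mem hx hq) ?_, rfl⟩
    rw [F.mul_on hf _ hq _ hx, F.mul_on hf _ hx _ hq]
    exact Subgroup.mem_centralizer_iff.mp hc _ (hPQ ▸ ⟨q, hq, rfl⟩)
  rw [← SetLike.coe_sort_coe, ← SetLike.coe_sort_coe, Nat.card_coe_set_eq, Nat.card_coe_set_eq]
  exact (Set.ncard_le_ncard hsub (Set.toFinite _)).trans (Set.ncard_image_le (Set.toFinite _))

theorem Centric.inv_mul_mem_of_fix {T U : Subgroup S} (hT : F.Centric T)
    (hUN : U ≤ Subgroup.normalizer (T : Set S)) {γ : S → S} (hγ : F.Mor U γ)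
    (hTU : T ≤ U) (hid : ∀ t ∈ T, γ t = t) {u : S} (hu : u ∈ U) : u⁻¹ * γ u ∈ T := by
  refine hT.centralizer_le <| Subgroup.mem_centralizer_iff.mpr fun t ht => ?_
  have hconj : u * t * u⁻¹ = γ u * t * (γ u)⁻¹ :=
    calc u * t * u⁻¹ = γ (u * t * u⁻¹) :=
          (hid _ ((Subgroup.mem_normalizer_iff.mp (hUN hu) t).mp ht)).symm
      _ = γ u * t * (γ u)⁻¹ := by rw [hγ.map_conj hu (hTU ht), hid t ht]
  calc t * (u⁻¹ * γ u) = u⁻¹ * (u * t * u⁻¹) * γ u := by group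
    _ = u⁻¹ * γ u * t := by rw [hconj]; group

end Centric

section Extensions

/-- The extender `N_f` of `f : D → S`, as in the extension axiom. -/
def extender (D : Subgroup S) (f : S → S) : Set S :=
  {x | x ∈ Subgroup.normalizer (D : Set S) ∧ ∃ y : S, ∀ q ∈ D, f (x * q * x⁻¹) = y * f q * y⁻¹}

theorem inf_normalizer_subset_extender {Q D : Subgroup S} {ψ χ : S → S} (hψ : F.Mor Q ψ)
    (hDQ : D ≤ Q) {z : S} (hz : z ∈ Q) (hχ : ∀ d ∈ D, χ d = ψ (z * d * z⁻¹)) :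
    ((Q ⊓ Subgroup.normalizer (D : Set S) : Subgroup S) : Set S) ⊆ extender D χ := by
  rintro x ⟨hxQ, hxN⟩
  refine ⟨hxN, ψ (z * x * z⁻¹), fun q hq => ?_⟩
  have hconj : ∀ y ∈ Q, z * y * z⁻¹ ∈ Q := fun y hy => Q.mul_mem (Q.mul_mem hz hy) (Q.inv_mem hz)
  rw [hχ _ ((Subgroup.mem_normalizer_iff.mp hxN q).mp hq), hχ q hq,
    ← hψ.map_conj (hconj x hxQ) (hconj q (hDQ hq))]
  congr 1
  group

variable [Finite S]

theorem exists_nonextendable_extension {Q : Subgroup S} {ψ : S → S} (hψ : F.Mor Q ψ) :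
    ∃ (R : Subgroup S) (χ : S → S), Q ≤ R ∧ (∀ x ∈ Q, χ x = ψ x) ∧ F.Nonextendable R χ := by
  have hfin := Set.toFinite {R : Subgroup S | ∃ χ, F.Mor R χ ∧ ∀ x ∈ Q, χ x = ψ x}
  obtain ⟨R, hQR, hR⟩ := hfin.exists_le_maximal (a := Q) ⟨ψ, hψ, fun _ _ => rfl⟩
  obtain ⟨χ, hχ, hχψ⟩ := hR.prop
  refine ⟨R, χ, hQR, hχψ, hχ, fun R' g hRR' hg hgχ => ?_⟩
  exact (hR.eq_of_le ⟨g, hg, fun x hx => (hgχ x (hQR hx)).trans (hχψ x hx)⟩ hRR').symm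

theorem exists_nonextendable_extension_of_centric {p : ℕ} (hF : F.Saturated p)
    {P D : Subgroup S} (hP : F.Centric P) (hPD : P ≤ D) {ψ : S → S} (hψ : F.Mor D ψ) :
    ∃ (Q : Subgroup S) (χ : S → S),
      extender D ψ ⊆ Q ∧ (∀ x ∈ D, χ x = ψ x) ∧ F.Nonextendable Q χ := by
  obtain ⟨R, g, hg, hDR, hgψ, hR⟩ := hF.2 D ψ hψ fun Q hQ =>
    ((hP.mono hPD).of_isConj ⟨ψ, hψ, hQ.symm⟩).fullyCentralized
  obtain ⟨Q, χ, hRQ, hχg, hχ⟩ := exists_nonextendable_extension hg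
  exact ⟨Q, χ, fun x hx => hRQ (hR ▸ hx : x ∈ (R : Set S)),
    fun x hx => (hχg x (hDR hx)).trans (hgψ x hx), hχ⟩

end Extensions

section Automorphisms

variable {V : Subgroup S} {f : S → S}

variable (F) in
/-- `Aut_F(V)`; the subgroup `Aut_S(V)` of it is `V.normalizerMonoidHom.range`. -/
def autF (V : Subgroup S) : Subgroup (MulAut V) where
  carrier := {π | ∃ f : S → S, F.Mor V f ∧ ∀ x : V, (π x : S) = f x}
  one_mem' := ⟨fun x => x, F.mor_id V, fun _ => rfl⟩
  mul_mem' := by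
    rintro π₁ π₂ ⟨f₁, h₁, e₁⟩ ⟨f₂, h₂, e₂⟩
    exact ⟨f₁ ∘ f₂, F.comp_mem h₂ h₁ fun x hx => e₂ ⟨x, hx⟩ ▸ (π₂ ⟨x, hx⟩).2,
      fun x => by simp [e₁, e₂]⟩
  inv_mem' := by
    rintro π ⟨f, hf, e⟩
    obtain ⟨g, hg, hgf⟩ := F.inv_mem V hf (MulAut.image_eq_of_coe_apply e).symm
    refine ⟨g, hg, fun x => ?_⟩
    conv_rhs => rw [← MulAut.apply_inv_self _ π x, e]
    exact (hgf _ (π⁻¹ x).2).symm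

theorem normalizerMonoidHom_range_le_autF :
    V.normalizerMonoidHom.range ≤ F.autF V := by
  rintro _ ⟨s, rfl⟩
  exact ⟨fun x => s * x * s⁻¹, F.conj_mem V s, fun x => by simp⟩

theorem ncard_autS : Set.ncard {g : ↥V → S | ∃ s ∈ Subgroup.normalizer (V : Set S),
    ∀ x : ↥V, g x = s * (x : S) * s⁻¹} = Nat.card V.normalizerMonoidHom.range := by
  have : {g : ↥V → S | ∃ s ∈ Subgroup.normalizer (V : Set S), ∀ x : ↥V, g x = s * (x : S) * s⁻¹} =
      (fun π x => (π x : S)) '' (V.normalizerMonoidHom.range : Set (MulAut V)) := by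
    ext g
    constructor
    · rintro ⟨s, hs, hg⟩
      exact ⟨_, ⟨⟨s, hs⟩, rfl⟩, funext fun x => by simp [hg]⟩
    · rintro ⟨_, ⟨s, rfl⟩, rfl⟩
      exact ⟨s, s.2, fun x => by simp⟩
  rw [this, Set.ncard_image_of_injective _ (MulAut.coe_apply_injective V)]
  exact (Nat.card_coe_set_eq _).symm

variable [Finite S]

noncomputable def autOfMor (hf : F.Mor V f) (hmaps : ∀ x ∈ V, f x ∈ V) : MulAut V :=
  MulEquiv.ofBijective
    ({ toFun := fun x => ⟨f x, hmaps x x.2⟩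
       map_one' := Subtype.ext hf.map_one
       map_mul' := fun x y => Subtype.ext (F.mul_on hf x x.2 y y.2) } : V →* V)
    (Finite.injective_iff_bijective.mp fun x y hxy =>
      Subtype.ext (F.inj_on hf x.2 y.2 (congrArg Subtype.val hxy)))

@[simp]
theorem coe_autOfMor_apply (hf : F.Mor V f) (hmaps : ∀ x ∈ V, f x ∈ V) (x : V) :
    (autOfMor hf hmaps x : S) = f x :=
  rfl

theorem autOfMor_mem_autF (hf : F.Mor V f) (hmaps : ∀ x ∈ V, f x ∈ V) :
    autOfMor hf hmaps ∈ F.autF V :=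
  ⟨f, hf, fun _ => rfl⟩

theorem ncard_autF : Set.ncard {g : ↥V → S | ∃ f : S → S, F.Mor V f ∧
    f '' (V : Set S) = (V : Set S) ∧ ∀ x : ↥V, g x = f (x : S)} = Nat.card (F.autF V) := by
  have : {g : ↥V → S | ∃ f : S → S, F.Mor V f ∧ f '' (V : Set S) = (V : Set S) ∧
      ∀ x : ↥V, g x = f (x : S)} = (fun π x => (π x : S)) '' (F.autF V : Set (MulAut V)) := by
    ext g
    constructor
    · rintro ⟨f, hf, himg, hg⟩
      have hmaps : ∀ x ∈ V, f x ∈ V := fun x hx => (himg ▸ ⟨x, hx, rfl⟩ : f x ∈ (V : Set S))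
      exact ⟨autOfMor hf hmaps, autOfMor_mem_autF hf hmaps, funext fun x => (hg x).symm⟩
    · rintro ⟨π, ⟨f, hf, e⟩, rfl⟩
      exact ⟨f, hf, MulAut.image_eq_of_coe_apply e, e⟩
  rw [this, Set.ncard_image_of_injective _ (MulAut.coe_apply_injective V)]
  exact (Nat.card_coe_set_eq _).symm

theorem Saturated.not_dvd_index {p : ℕ} (hF : F.Saturated p) (hV : F.FullyNormalized V) :
    ¬ p ∣ (V.normalizerMonoidHom.range.subgroupOf (F.autF V)).index := by
  have h := (hF.1 V hV).2
  rwa [ncard_autF, ncard_autS, ← Nat.card_congr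
    (Subgroup.subgroupOfEquivOfLe normalizerMonoidHom_range_le_autF).toEquiv,
    ← Subgroup.card_mul_index (V.normalizerMonoidHom.range.subgroupOf (F.autF V)),
    Nat.mul_div_cancel_left _ Nat.card_pos] at h

end Automorphisms

section Saturated

variable [Finite S] {p : ℕ} [Fact p.Prime]

variable (F) in
theorem exists_fullyNormalized_isConj (U : Subgroup S) :
    ∃ V : Subgroup S, F.IsConj U V ∧ F.FullyNormalized V := by
  have : Nonempty {Q : Subgroup S // F.IsConj U Q} := ⟨⟨U, isConj_refl U⟩⟩
  obtain ⟨⟨V, hUV⟩, hmax⟩ :=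
    Finite.exists_max fun Q : {Q : Subgroup S // F.IsConj U Q} =>
      Nat.card (Subgroup.normalizer (Q.1 : Set S))
  exact ⟨V, hUV, fun Q hVQ => hmax ⟨Q, hUV.trans hVQ⟩⟩

/-- The Sylow axiom at `V` puts the `p`-element `f ∈ Aut_F(V)` into a conjugate `Aut_S(V)^χ`;
the conjugating element of `N_S(V)` centralizes the centric subgroup `χ⁻¹(W)`, hence lies in it. -/
theorem exists_conj_of_fullyNormalized (hS : IsPGroup p S) (hF : F.Saturated p)
    {V W : Subgroup S} (hV : F.FullyNormalized V) (hW : F.Centric W) (hWV : W ≤ V)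
    {f : S → S} (hf : F.Mor V f) (hfix : ∀ w ∈ W, f w = w)
    (hcoset : ∀ v ∈ V, v⁻¹ * f v ∈ W) :
    ∃ w ∈ W, ∀ v ∈ V, f v = w * v * w⁻¹ := by
  have hmaps : ∀ v ∈ V, f v ∈ V := fun v hv => by
    simpa using V.mul_mem hv (hWV (hcoset v hv))
  set π := autOfMor hf hmaps
  obtain ⟨k, hk⟩ := (hS.to_subgroup W).exists_card_eq
  have hπ : (⟨π, autOfMor_mem_autF hf hmaps⟩ : F.autF V) ^ p ^ k = 1 := by
    refine Subtype.ext (MulEquiv.ext fun x => Subtype.ext ?_)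
    have hτ : (x : S)⁻¹ * f x ∈ W := hcoset x x.2
    have hτ1 : ((x : S)⁻¹ * f x) ^ p ^ k = 1 := by
      simpa [hk] using congrArg Subtype.val (pow_card_eq_one' (G := W) (x := ⟨_, hτ⟩))
    rw [Subgroup.coe_pow, MulAut.pow_apply_eq_mul_pow π x (Subtype.ext (hfix _ hτ))]
    simp [π, hτ1]
  obtain ⟨⟨χ, hχ⟩, hconj⟩ :=
    Subgroup.exists_inv_mul_mul_mem_of_not_dvd_index (hF.not_dvd_index hV) hπ
  obtain ⟨s, hs⟩ := Subgroup.mem_subgroupOf.mp hconj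
  have hs' : ∀ x : V, (χ⁻¹ (π (χ x)) : S) = s * x * (s : S)⁻¹ := fun x => by
    simpa using (congrArg (fun φ : MulAut V => (φ x : S)) hs).symm
  obtain ⟨g, hg, hχg⟩ := (F.autF V).inv_mem hχ
  have hgW : F.Mor W g := F.restrict_mem W hWV hg
  have hsC : (s : S) ∈ Subgroup.centralizer (F.morImage hgW : Set S) := by
    rintro _ ⟨w, hw, rfl⟩
    have h := hs' (χ⁻¹ ⟨w, hWV hw⟩)
    rw [MulAut.apply_inv_self, show π ⟨w, hWV hw⟩ = ⟨w, hWV hw⟩ from Subtype.ext (hfix w hw),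
      hχg] at h
    exact eq_mul_inv_iff_mul_eq.mp h
  obtain ⟨w, hw, hws⟩ := (hW.of_isConj ⟨g, hgW, rfl⟩).centralizer_le hsC
  refine ⟨w, hw, fun v hv => ?_⟩
  set w' : V := ⟨w, hWV hw⟩
  set v' : V := ⟨v, hv⟩
  have key : χ⁻¹ (π v') = χ⁻¹ (w' * v' * w'⁻¹) := Subtype.ext <|
    calc (χ⁻¹ (π v') : S) = χ⁻¹ (π (χ (χ⁻¹ v'))) := by rw [MulAut.apply_inv_self]
      _ = χ⁻¹ w' * χ⁻¹ v' * (χ⁻¹ w' : S)⁻¹ := by rw [hs', hχg w', hws]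
      _ = (χ⁻¹ (w' * v' * w'⁻¹) : S) := by simp
  simpa [π, w', v'] using congrArg Subtype.val (χ⁻¹.injective key)

theorem exists_conj_of_le_normalizer (hS : IsPGroup p S) (hF : F.Saturated p)
    {T U : Subgroup S} (hT : F.Centric T) (hTU : T ≤ U)
    (hUN : U ≤ Subgroup.normalizer (T : Set S)) {γ : S → S} (hγ : F.Mor U γ)
    (hid : ∀ t ∈ T, γ t = t) :
    ∃ z ∈ T, ∀ u ∈ U, γ u = z * u * z⁻¹ := by
  have hcoset : ∀ u ∈ U, u⁻¹ * γ u ∈ T := fun u hu => hT.inv_mul_mem_of_fix hUN hγ hTU hid hu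
  have hγU : ∀ u ∈ U, γ u ∈ U := fun u hu => by simpa using U.mul_mem hu (hTU (hcoset u hu))
  obtain ⟨V, ⟨β, hβ, hβU⟩, hV⟩ := F.exists_fullyNormalized_isConj U
  obtain ⟨β', hβ', hβ'β⟩ := F.inv_mem V hβ hβU.symm
  have hβV : ∀ u ∈ U, β u ∈ V := fun u hu => (hβU ▸ ⟨u, hu, rfl⟩ : β u ∈ (V : Set S))
  have hβ_surj : ∀ v ∈ V, ∃ u ∈ U, β u = v := fun v hv => (hβU ▸ hv : v ∈ β '' U)
  have hβ'V : ∀ v ∈ V, β' v ∈ U := by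
    intro v hv
    obtain ⟨u, hu, rfl⟩ := hβ_surj v hv
    rwa [hβ'β u hu]
  have hβT : F.Mor T β := F.restrict_mem T hTU hβ
  have hf : F.Mor V (β ∘ γ ∘ β') :=
    F.comp_mem (F.comp_mem hβ' hγ hβ'V) hβ fun v hv => hγU _ (hβ'V v hv)
  obtain ⟨_, ⟨t, ht, rfl⟩, hw⟩ := exists_conj_of_fullyNormalized (W := F.morImage hβT) hS hF hV
    (hT.of_isConj ⟨β, hβT, rfl⟩) (by rintro _ ⟨t, ht, rfl⟩; exact hβV t (hTU ht)) hf
    (by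
      rintro _ ⟨t, ht, rfl⟩
      simp [hβ'β t (hTU ht), hid t ht])
    (by
      intro v hv
      obtain ⟨u, hu, rfl⟩ := hβ_surj v hv
      refine ⟨u⁻¹ * γ u, hcoset u hu, ?_⟩
      simp [hβ'β u hu, F.mul_on hβ _ (U.inv_mem hu) _ (hγU u hu), hβ.map_inv hu])
  refine ⟨t, ht, fun u hu => F.inj_on hβ (hγU u hu)
    (U.mul_mem (U.mul_mem (hTU ht) hu) (U.inv_mem (hTU ht))) ?_⟩
  simpa [hβ'β u hu, hβ.map_conj (hTU ht) hu] using hw (β u) (hβV u hu)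

theorem exists_conj_of_fix (hS : IsPGroup p S) (hF : F.Saturated p) {T R : Subgroup S}
    (hT : F.Centric T) (hTR : T ≤ R) {γ : S → S} (hγ : F.Mor R γ) (hid : ∀ t ∈ T, γ t = t) :
    ∃ z ∈ T, ∀ r ∈ R, γ r = z * r * z⁻¹ := by
  induction T using WellFoundedGT.induction generalizing γ with
  | _ T ih =>
  rcases hTR.eq_or_lt with rfl | hlt
  · exact ⟨1, T.one_mem, fun r hr => by simp [hid r hr]⟩
  set U := R ⊓ Subgroup.normalizer (T : Set S)
  have hTU : T < U := hS.lt_inf_normalizer hlt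
  obtain ⟨z₁, hz₁, h₁⟩ := exists_conj_of_le_normalizer hS hF hT hTU.le inf_le_right
    (F.restrict_mem U inf_le_left hγ) hid
  have hid₁ : ∀ u ∈ U, z₁⁻¹ * γ u * z₁ = u := fun u hu => by rw [h₁ u hu]; group
  obtain ⟨z₂, -, h₂⟩ := ih U hTU (hT.mono hTU.le) inf_le_left (hγ.conj_comp z₁) hid₁
  have hz₂ : z₂ ∈ T := hT.centralizer_le <| Subgroup.mem_centralizer_iff.mpr fun t ht => by
    have h := h₂ t (hTR ht)
    rw [hid₁ t (hTU.le ht)] at h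
    exact eq_mul_inv_iff_mul_eq.mp h
  refine ⟨z₁ * z₂, T.mul_mem hz₁ hz₂, fun r hr => ?_⟩
  calc γ r = z₁ * (z₁⁻¹ * γ r * z₁) * z₁⁻¹ := by group
    _ = z₁ * z₂ * r * (z₁ * z₂)⁻¹ := by rw [h₂ r hr]; group

/-- Apply `exists_conj_of_fix` to `ψ₂ ∘ ψ₁⁻¹` on `ψ₁(D)`. -/
theorem exists_eq_comp_conj (hS : IsPGroup p S) (hF : F.Saturated p) {P D : Subgroup S}
    (hP : F.Centric P) (hPD : P ≤ D) {ψ₁ ψ₂ : S → S} (h₁ : F.Mor D ψ₁) (h₂ : F.Mor D ψ₂)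
    (heq : ∀ x ∈ P, ψ₁ x = ψ₂ x) :
    ∃ z ∈ P, (∀ x ∈ P, z * x = x * z) ∧ ∀ d ∈ D, ψ₂ d = ψ₁ (z * d * z⁻¹) := by
  obtain ⟨g, hg, hgψ₁⟩ := F.inv_mem (F.morImage h₁) h₁ rfl
  have h₁P : F.Mor P ψ₁ := F.restrict_mem P hPD h₁
  have hγ : F.Mor (F.morImage h₁) (ψ₂ ∘ g) := F.comp_mem hg h₂ <| by
    rintro _ ⟨d, hd, rfl⟩
    rwa [hgψ₁ d hd]
  obtain ⟨_, ⟨z, hz, rfl⟩, hγz⟩ := exists_conj_of_fix (T := F.morImage h₁P) hS hF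
    (hP.of_isConj ⟨ψ₁, h₁P, rfl⟩)
    (by rintro _ ⟨x, hx, rfl⟩; exact ⟨x, hPD hx, rfl⟩) hγ
    (by rintro _ ⟨x, hx, rfl⟩; simp [hgψ₁ x (hPD hx), ← heq x hx])
  have hzψ : ∀ d ∈ D, ψ₂ d = ψ₁ (z * d * z⁻¹) := fun d hd => by
    simpa [hgψ₁ d hd, h₁.map_conj (hPD hz) hd] using hγz (ψ₁ d) ⟨d, hd, rfl⟩
  refine ⟨z, hz, fun x hx => ?_, hzψ⟩
  have h := F.inj_on h₁ (D.mul_mem (D.mul_mem (hPD hz) (hPD hx)) (D.inv_mem (hPD hz))) (hPD hx)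
    ((hzψ x (hPD hx)).symm.trans (heq x hx).symm)
  exact mul_inv_eq_iff_eq_mul.mp h

theorem eq_of_le_of_nonextendable (hS : IsPGroup p S) (hF : F.Saturated p)
    {P Q₁ Q₂ : Subgroup S} (hP : F.Centric P) (hPQ₂ : P ≤ Q₂) (hQ : Q₂ ≤ Q₁) {ψ₁ ψ₂ : S → S}
    (h₁ : F.Mor Q₁ ψ₁) (hn₂ : F.Nonextendable Q₂ ψ₂) (heq : ∀ x ∈ P, ψ₁ x = ψ₂ x) :
    Q₁ = Q₂ := by
  obtain ⟨z, hz, -, hzψ⟩ :=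
    exists_eq_comp_conj hS hF hP hPQ₂ (F.restrict_mem Q₂ hQ h₁) hn₂.1 heq
  exact hn₂.2 Q₁ _ hQ (h₁.comp_conj (hQ (hPQ₂ hz))) fun x hx => (hzψ x hx).symm

theorem eq_of_nonextendable (hS : IsPGroup p S) (hF : F.Saturated p) {P Q₁ Q₂ : Subgroup S}
    (hP : F.Centric P) (hPQ₁ : P ≤ Q₁) (hPQ₂ : P ≤ Q₂) {ψ₁ ψ₂ : S → S}
    (heq : ∀ x ∈ P, ψ₁ x = ψ₂ x) (hn₁ : F.Nonextendable Q₁ ψ₁)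
    (hn₂ : F.Nonextendable Q₂ ψ₂) : Q₁ = Q₂ := by
  generalize hD : Q₁ ⊓ Q₂ = D
  induction D using WellFoundedGT.induction generalizing Q₁ Q₂ ψ₁ ψ₂ with
  | _ D ih =>
  subst hD
  rcases (inf_le_left : Q₁ ⊓ Q₂ ≤ Q₁).eq_or_lt with hD₁ | hD₁
  · exact (eq_of_le_of_nonextendable hS hF hP hPQ₁ (hD₁ ▸ inf_le_right) hn₂.1 hn₁
      fun x hx => (heq x hx).symm).symm
  rcases (inf_le_right : Q₁ ⊓ Q₂ ≤ Q₂).eq_or_lt with hD₂ | hD₂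
  · exact eq_of_le_of_nonextendable hS hF hP hPQ₂ (hD₂ ▸ inf_le_left) hn₁.1 hn₂ heq
  have hPD : P ≤ Q₁ ⊓ Q₂ := le_inf hPQ₁ hPQ₂
  obtain ⟨z, hz, -, hzψ⟩ := exists_eq_comp_conj hS hF hP hPD
    (F.restrict_mem _ inf_le_left hn₁.1) (F.restrict_mem _ inf_le_right hn₂.1) heq
  obtain ⟨Q, χ, hQ, hχ, hn⟩ := exists_nonextendable_extension_of_centric hF hP hPD
    (F.restrict_mem _ inf_le_right hn₂.1)
  have hQ₁ : Q₁ ⊓ Subgroup.normalizer ((Q₁ ⊓ Q₂ : Subgroup S) : Set S) ≤ Q := fun x hx =>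
    hQ (inf_normalizer_subset_extender hn₁.1 inf_le_left (hPQ₁ hz) hzψ hx)
  have hQ₂ : Q₂ ⊓ Subgroup.normalizer ((Q₁ ⊓ Q₂ : Subgroup S) : Set S) ≤ Q := fun x hx =>
    hQ (inf_normalizer_subset_extender hn₂.1 inf_le_right Q₂.one_mem (by simp) hx)
  have hPQ : P ≤ Q := hPD.trans ((le_inf inf_le_left Subgroup.le_normalizer).trans hQ₁)
  have hχP : ∀ x ∈ P, ψ₂ x = χ x := fun x hx => (hχ x (hPD hx)).symm
  have e₁ : Q₁ = Q := ih _ ((hS.lt_inf_normalizer hD₁).trans_le (le_inf inf_le_left hQ₁))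
    hPQ₁ hPQ (fun x hx => (heq x hx).trans (hχP x hx)) hn₁ hn rfl
  have e₂ : Q₂ = Q := ih _ ((hS.lt_inf_normalizer hD₂).trans_le (le_inf inf_le_left hQ₂))
    hPQ₂ hPQ hχP hn₂ hn rfl
  exact e₁.trans e₂.symm

end Saturated

end FusionSystem

theorem stmt16_general (p : ℕ) (hp : p.Prime) (S : Type) [Group S] [Fintype S]
    (hS : IsPGroup p S) (F : FusionSystem S) (hF : F.Saturated p)
    (P : Subgroup S) (hP : F.Centric P) (φ : S → S)
    (Q₁ Q₂ : Subgroup S) (ψ₁ ψ₂ : S → S)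
    (hPQ₁ : P ≤ Q₁) (hPQ₂ : P ≤ Q₂)
    (he₁ : ∀ x ∈ P, ψ₁ x = φ x) (he₂ : ∀ x ∈ P, ψ₂ x = φ x)
    (hn₁ : F.Nonextendable Q₁ ψ₁) (hn₂ : F.Nonextendable Q₂ ψ₂) :
    Q₁ = Q₂ ∧ ∃ z ∈ P, (∀ x ∈ P, z * x = x * z) ∧ ∀ x ∈ Q₁, ψ₂ x = ψ₁ (z * x * z⁻¹) := by
  have := Fact.mk hp
  have heq : ∀ x ∈ P, ψ₁ x = ψ₂ x := fun x hx => (he₁ x hx).trans (he₂ x hx).symm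
  obtain rfl := FusionSystem.eq_of_nonextendable hS hF hP hPQ₁ hPQ₂ heq hn₁ hn₂
  exact ⟨rfl, FusionSystem.exists_eq_comp_conj hS hF hP hPQ₁ hn₁.1 hn₂.1 heq⟩

/-- In a saturated fusion system `F` on a finite `p`-group `S`, every
`F`-morphism `φ : P → S` with `P` `F`-centric has a nonextendable extension that is unique up
to precomposition with conjugation by an element of `Z(P)`: if `ψ₁ : Q₁ → S`, `ψ₂ : Q₂ → S`
are nonextendable extensions of `φ`, then `Q₁ = Q₂` and `ψ₂ = ψ₁ ∘ c_z` with `z ∈ Z(P)`. -/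
theorem stmt16 (p : ℕ) (hp : p.Prime) (S : Type) [Group S] [Fintype S]
    (hS : IsPGroup p S) (F : FusionSystem S) (hF : F.Saturated p)
    (P : Subgroup S) (hP : F.Centric P) (φ : S → S) (hφ : F.Mor P φ)
    (Q₁ Q₂ : Subgroup S) (ψ₁ ψ₂ : S → S)
    (hPQ₁ : P ≤ Q₁) (hPQ₂ : P ≤ Q₂)
    (he₁ : ∀ x ∈ P, ψ₁ x = φ x) (he₂ : ∀ x ∈ P, ψ₂ x = φ x)
    (hn₁ : F.Nonextendable Q₁ ψ₁) (hn₂ : F.Nonextendable Q₂ ψ₂) :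
    Q₁ = Q₂ ∧ ∃ z ∈ P, (∀ x ∈ P, z * x = x * z) ∧ ∀ x ∈ Q₁, ψ₂ x = ψ₁ (z * x * z⁻¹) :=
  stmt16_general p hp S hS F hF P hP φ Q₁ Q₂ ψ₁ ψ₂ hPQ₁ hPQ₂ he₁ he₂ hn₁ hn₂
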